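/- The signed Roman domination number of the Kneser graph K_{11,2} equals 3, i.e. γ_sR(K_{11,2}) = 3. -/

import Mathlib

def kneserGraph (n k : ℕ) : SimpleGraph {s : Finset (Fin n) // s.card = k} where
  Adj a b := a ≠ b ∧ Disjoint a.1 b.1
  symm := ⟨fun a b h => ⟨h.1.symm, h.2.symm⟩⟩
  loopless := ⟨fun a h => h.1 rfl⟩

def IsRDF {V : Type*} (G : SimpleGraph V) (f : V → ℕ) : Prop :=
  (∀ v, f v ≤ 2) ∧ ∀ v, f v = 0 → ∃ u, G.Adj v u ∧ f u = 2

noncomputable def romanDomNum {V : Type*} [Fintype V] (G : SimpleGraph V) : ℕ :=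
  sInf {w | ∃ f, IsRDF G f ∧ ∑ v, f v = w}

open Classical in
def IsTRDF {V : Type*} [Fintype V] (G : SimpleGraph V) (f : V → ℕ) : Prop :=
  IsRDF G f ∧ ∀ v, 1 ≤ ∑ u ∈ Finset.univ.filter (fun u => G.Adj v u), f u

noncomputable def totalRomanDomNum {V : Type*} [Fintype V] (G : SimpleGraph V) : ℕ :=
  sInf {w | ∃ f, IsTRDF G f ∧ ∑ v, f v = w}

open Classical in
def IsSRDF {V : Type*} [Fintype V] (G : SimpleGraph V) (f : V → ℤ) : Prop :=
  (∀ v, f v = -1 ∨ f v = 1 ∨ f v = 2) ∧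
  (∀ v, f v = -1 → ∃ u, G.Adj v u ∧ f u = 2) ∧
  (∀ v, 1 ≤ f v + ∑ u ∈ Finset.univ.filter (fun u => G.Adj v u), f u)

noncomputable def signedRomanDomNum {V : Type*} [Fintype V] (G : SimpleGraph V) : ℤ :=
  sInf {w | ∃ f, IsSRDF G f ∧ ∑ v, f v = w}

def IsDominatingSet {V : Type*} (G : SimpleGraph V) (S : Finset V) : Prop :=
  ∀ v, v ∉ S → ∃ u ∈ S, G.Adj v u

noncomputable def domNum {V : Type*} [Fintype V] (G : SimpleGraph V) : ℕ :=
  sInf {m | ∃ S : Finset V, IsDominatingSet G S ∧ S.card = m}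

/-!
Write `W` for the weight of `f` and `g a` for the sum of `f` over the pairs containing `a`. The
closed neighbourhood of `{a, b}` is everything except the other pairs meeting `{a, b}`, so its
weight is `W - g a - g b + 2 f {a, b} ≥ 1`. Summing this over the ten pairs through `a` gives
`7 g a ≤ 8 W - 10`, and summing that over `a` (where `∑ g = 2 W`) gives `74 W ≥ 110`, so `W ≥ 2`.
If `W = 2`, then every `g a ≤ 0`, contradicting `∑ g = 4`.

The weight `3` is attained by taking `2` on the edges of the `4`-cycle `7 - 8 - 10 - 9`, `-1` on
the pairs meeting `{7, 8, 9, 10}` in a single point, and `1` elsewhere.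
-/

open Finset

instance (n k : ℕ) : DecidableRel (kneserGraph n k).Adj :=
  fun a b => decidable_of_iff (a ≠ b ∧ Disjoint a.1 b.1) Iff.rfl

namespace kneserGraph

variable {n k : ℕ}

theorem adj_iff_disjoint (hk : k ≠ 0) {v u : {s : Finset (Fin n) // s.card = k}} :
    (kneserGraph n k).Adj v u ↔ Disjoint v.1 u.1 := by
  refine ⟨And.right, fun h => ⟨?_, h⟩⟩
  rintro rfl
  rw [disjoint_self_iff_empty, ← card_eq_zero, v.2] at h
  exact hk h

def star (k : ℕ) (a : Fin n) : Finset {s : Finset (Fin n) // s.card = k} := {v | a ∈ v.1}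

@[simp]
theorem mem_star {a : Fin n} {v : {s : Finset (Fin n) // s.card = k}} :
    v ∈ star k a ↔ a ∈ v.1 := by
  simp [star]

theorem sum_sum_star (f : {s : Finset (Fin n) // s.card = k} → ℤ) :
    ∑ a, ∑ v ∈ star k a, f v = k * ∑ v, f v := by
  rw [mul_sum, sum_comm' (t' := univ) (s' := fun v => v.1) (by simp)]
  refine sum_congr rfl fun v _ => ?_
  rw [sum_const, v.2, nsmul_eq_mul]

theorem sum_star {M : Type*} [AddCommMonoid M] (a : Fin n) (F : Finset (Fin n) → M) :
    ∑ v ∈ star 2 a, F v.1 = ∑ b ∈ univ.erase a, F {a, b} := by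
  symm
  refine sum_bij (fun b hb => ⟨{a, b}, card_pair (ne_of_mem_erase hb).symm⟩) (by simp)
    (fun b hb c _ h => ?_) (fun v hv => ?_) (fun _ _ => rfl)
  · have hs : ({a, b} : Finset (Fin n)) = {a, c} := Subtype.ext_iff.mp h
    have : b ∈ ({a, c} : Finset (Fin n)) := by
      rw [← hs]; simp
    simpa [ne_of_mem_erase hb] using this
  · obtain ⟨x, y, hxy, hv'⟩ := card_eq_two.mp v.2
    have ha := mem_star.mp hv
    rw [hv', mem_insert, mem_singleton] at ha
    rcases ha with rfl | rfl
    · exact ⟨y, by simp [hxy.symm], Subtype.ext hv'.symm⟩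
    · exact ⟨x, by simp [hxy], Subtype.ext (hv'.trans (pair_comm _ _)).symm⟩

theorem card_star (a : Fin n) : #(star 2 a) = n - 1 := by
  rw [card_eq_sum_ones, sum_star a (fun _ => 1)]
  simp

theorem sum_star_sum_mem (a : Fin n) (h : Fin n → ℤ) :
    ∑ v ∈ star 2 a, ∑ i ∈ v.1, h i = (n - 2) * h a + ∑ i, h i := by
  rw [sum_star a (fun s => ∑ i ∈ s, h i),
    sum_congr rfl fun b hb => sum_pair (ne_of_mem_erase hb).symm, sum_add_distrib,
    sum_const, card_erase_of_mem (mem_univ a), sum_erase_eq_sub (mem_univ a)]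
  have : 1 ≤ n := Fin.pos a
  simp [Nat.cast_sub this]
  ring

theorem star_inter_star {a b : Fin n} (hab : a ≠ b) :
    star 2 a ∩ star 2 b = {⟨{a, b}, card_pair hab⟩} := by
  ext u
  simp only [mem_inter, mem_star, mem_singleton, Subtype.ext_iff]
  refine ⟨fun ⟨ha, hb⟩ => ?_, fun h => by simp [h]⟩
  refine (eq_of_subset_of_card_le (insert_subset ha (singleton_subset_iff.2 hb)) ?_).symm
  rw [card_pair hab, u.2]

theorem closedNbhd_sum_eq (f : {s : Finset (Fin n) // s.card = 2} → ℤ) (v) :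
    f v + ∑ u with (kneserGraph n 2).Adj v u, f u
      = ∑ u, f u - ∑ i ∈ v.1, ∑ u ∈ star 2 i, f u + 2 * f v := by
  obtain ⟨a, b, hab, hv⟩ := card_eq_two.mp v.2
  have hnonadj : ({u | ¬ (kneserGraph n 2).Adj v u} : Finset _) = star 2 a ∪ star 2 b := by
    ext u
    simp only [mem_filter, mem_univ, true_and, adj_iff_disjoint two_ne_zero, hv, mem_union,
      mem_star, disjoint_insert_left, disjoint_singleton_left, not_and_or, not_not]
  have hpair : (⟨{a, b}, card_pair hab⟩ : {s : Finset (Fin n) // s.card = 2}) = v :=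
    Subtype.ext hv.symm
  have hstars := sum_union_inter (s₁ := star 2 a) (s₂ := star 2 b) (f := f)
  rw [← hnonadj, star_inter_star hab, hpair, sum_singleton] at hstars
  have hsplit := sum_filter_add_sum_filter_not univ ((kneserGraph n 2).Adj v) f
  rw [hv, sum_pair hab]
  linarith

theorem mul_sum_star_le (f : {s : Finset (Fin n) // s.card = 2} → ℤ)
    (hf : ∀ v, 1 ≤ f v + ∑ u with (kneserGraph n 2).Adj v u, f u) (a : Fin n) :
    (n - 4 : ℤ) * ∑ v ∈ star 2 a, f v ≤ (n - 3) * ∑ v, f v - (n - 1) := by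
  have hpair (v) : ∑ i ∈ v.1, ∑ u ∈ star 2 i, f u ≤ ∑ u, f u + 2 * f v - 1 := by
    linarith [hf v, closedNbhd_sum_eq f v]
  have hstar := sum_le_sum fun v (_ : v ∈ star 2 a) => hpair v
  rw [sum_star_sum_mem, sum_sum_star, sum_sub_distrib, sum_add_distrib, sum_const, sum_const,
    card_star, ← mul_sum, nsmul_eq_mul, nsmul_eq_mul, Nat.cast_sub (Fin.pos a)] at hstar
  push_cast at hstar
  linear_combination hstar

end kneserGraph

open kneserGraph in
theorem three_le_sum_of_forall_closedNbhd_sum_pos (f : {s : Finset (Fin 11) // s.card = 2} → ℤ)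
    (hf : ∀ v, 1 ≤ f v + ∑ u with (kneserGraph 11 2).Adj v u, f u) : 3 ≤ ∑ v, f v := by
  have hstar (a) : 7 * ∑ v ∈ star 2 a, f v ≤ 8 * ∑ v, f v - 10 := by
    have := mul_sum_star_le f hf a
    norm_num at this
    exact this
  have hsum := sum_le_sum fun a (_ : a ∈ univ) => hstar a
  rw [← mul_sum, sum_sum_star, sum_const, card_univ, Fintype.card_fin, nsmul_eq_mul] at hsum
  push_cast at hsum
  by_contra! hW
  have hstar_nonpos (a : Fin 11) : ∑ v ∈ star 2 a, f v ≤ 0 := by linarith [hstar a]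
  have := sum_nonpos fun a (_ : a ∈ univ) => hstar_nonpos a
  rw [sum_sum_star] at this
  push_cast at this
  linarith

def kneser112SRDF (v : {s : Finset (Fin 11) // s.card = 2}) : ℤ :=
  if v.1 ∈ ({{7, 8}, {7, 9}, {8, 10}, {9, 10}} : Finset (Finset (Fin 11))) then 2
  else if #(v.1 ∩ {7, 8, 9, 10}) = 1 then -1 else 1

set_option maxRecDepth 100000 in
theorem isSRDF_kneser112SRDF : IsSRDF (kneserGraph 11 2) kneser112SRDF := by
  refine ⟨fun v => ?_, by decide, fun v => ?_⟩
  · unfold kneser112SRDF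
    split_ifs <;> simp
  · rw [filter_congr_decidable]
    revert v
    decide

set_option maxRecDepth 100000 in
theorem sum_kneser112SRDF : ∑ v, kneser112SRDF v = 3 := by
  decide

theorem kneser112_signedRomanDomNum : signedRomanDomNum (kneserGraph 11 2) = 3 := by
  refine IsLeast.csInf_eq ⟨⟨kneser112SRDF, isSRDF_kneser112SRDF, sum_kneser112SRDF⟩, ?_⟩
  rintro _ ⟨f, hf, rfl⟩
  refine three_le_sum_of_forall_closedNbhd_sum_pos f fun v => ?_
  convert hf.2.2 v
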